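/- arXiv:2506.12828 — 6 statements merged into one kernel-verified Lean document; each statement's English description precedes it below -/
import Mathlib

section
/- Let U be finite, 𝒞 ⊆ 2^U, and f : 2^U → ℝ non-decreasing and ε-approximately 𝒞-submodular. Let S ∈ D_f with f(S) = f_max and δ_min > 0. Then for every C ⊆ U with f(C) = f_max that admits an ordering c_1,…,c_{|C|} with every prefix C_i ∈ 𝒞, it holds |S| < (1 + ε/δ_min + ln(δ_max/δ_min))·|C| + 1. -/
/-!
Greedy picks, at each step, an element of maximal marginal gain `δ_k`. Adding the `m = |C|`
elements of `C` one by one along its ordering and using approximate submodularity at each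
prefix shows that the remaining gap `f_max - f(S_k)` is at most `m (δ_k + ε)`. Hence
`r_k = f_max - f(S_k) - m ε` contracts by a factor `1 - 1/m ≤ exp(-1/m)` per step, starting
from `r_0 ≤ m δ_max`, so `r_k > m δ_min` forces `k < m ln(δ_max/δ_min)`. Once
`r_k ≤ m δ_min`, each remaining step gains at least `δ_min`, so at most `m (1 + ε/δ_min)`
steps are left.
-/

open Finset Real

def prefixSet {U : Type*} [DecidableEq U] {n : ℕ} (s : Fin n → U) (k : ℕ) : Finset U :=
  (Finset.univ.filter (fun j : Fin n => (j : ℕ) < k)).image s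

section GreedyRecurrence

variable {g : ℕ → ℝ} {n m : ℕ} {ε dmin dmax : ℝ}

lemma one_sub_inv_natCast_nonneg (m : ℕ) : 0 ≤ 1 - (m : ℝ)⁻¹ :=
  sub_nonneg.2 (Nat.cast_inv_le_one m)

lemma sub_mul_le_sub_of_le_sub_succ {d : ℝ} (hstep : ∀ k < n, d ≤ g (k + 1) - g k)
    {k : ℕ} (hk : k ≤ n) : ((n : ℝ) - k) * d ≤ g n - g k := by
  rw [← sum_Ico_sub g hk, ← Nat.cast_sub hk, ← Nat.card_Ico, ← nsmul_eq_mul]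
  exact card_nsmul_le_sum _ _ _ fun i hi => hstep i (mem_Ico.1 hi).2

lemma sub_sub_le_geom (hstep : ∀ k < n, 0 ≤ g (k + 1) - g k)
    (hgap : ∀ k < n, g n - g k ≤ m * (g (k + 1) - g k + ε)) {k : ℕ} (hk : k ≤ n) :
    g n - g k - m * ε ≤ (1 - (m : ℝ)⁻¹) ^ k * (g n - g 0 - m * ε) := by
  refine le_geom (u := fun k => g n - g k - m * ε) (one_sub_inv_natCast_nonneg m) k
    fun i hi => ?_
  have hi : i < n := by omega
  have hcontract : (m : ℝ)⁻¹ * (g n - g i - m * ε) ≤ g (i + 1) - g i := by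
    rcases m.eq_zero_or_pos with rfl | hm
    · simpa using hstep i hi
    · rw [inv_mul_le_iff₀ (by positivity)]
      linarith [hgap i hi]
  linarith

lemma lt_mul_log_of_mul_lt_geom {k : ℕ} (hdmin : 0 < dmin)
    (h : m * dmin < (1 - (m : ℝ)⁻¹) ^ k * (m * dmax)) : (k : ℝ) < m * log (dmax / dmin) := by
  rcases m.eq_zero_or_pos with rfl | hm
  · simp at h
  have hm : (0 : ℝ) < m := by exact_mod_cast hm
  have hexp : (1 - (m : ℝ)⁻¹) ^ k ≤ exp (-(k / m)) := by
    calc (1 - (m : ℝ)⁻¹) ^ k ≤ exp (-(m : ℝ)⁻¹) ^ k :=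
          pow_le_pow_left₀ (one_sub_inv_natCast_nonneg m) (one_sub_le_exp_neg _) k
      _ = exp (-(k / m)) := by rw [← exp_nat_mul]; ring_nf
  have hpow : 0 ≤ (1 - (m : ℝ)⁻¹) ^ k := pow_nonneg (one_sub_inv_natCast_nonneg m) k
  have hdmax : 0 < dmax := by
    by_contra! hdmax
    have := mul_nonpos_of_nonneg_of_nonpos hpow (mul_nonpos_of_nonneg_of_nonpos hm.le hdmax)
    linarith [mul_pos hm hdmin]
  have hlt : dmin < exp (-(k / m)) * dmax := by
    refine lt_of_mul_lt_mul_left ?_ hm.le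
    calc m * dmin < (1 - (m : ℝ)⁻¹) ^ k * (m * dmax) := h
      _ ≤ exp (-(k / m)) * (m * dmax) := by gcongr
      _ = m * (exp (-(k / m)) * dmax) := by ring
  have hexp_lt : exp (k / m) < dmax / dmin := by
    rw [lt_div_iff₀ hdmin]
    calc exp (k / m) * dmin < exp (k / m) * (exp (-(k / m)) * dmax) :=
          mul_lt_mul_of_pos_left hlt (exp_pos _)
      _ = dmax := by rw [← mul_assoc, ← exp_add]; simp
  have := (lt_log_iff_exp_lt (div_pos hdmax hdmin)).2 hexp_lt
  rwa [div_lt_iff₀ hm, mul_comm] at this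

theorem natCast_lt_of_greedy_recurrence (hε : 0 ≤ ε) (hdmin : 0 < dmin) (hdd : dmin ≤ dmax)
    (hstep : ∀ k < n, dmin ≤ g (k + 1) - g k)
    (hgap : ∀ k < n, g n - g k ≤ m * (g (k + 1) - g k + ε))
    (hstart : g n - g 0 ≤ m * (dmax + ε)) :
    (n : ℝ) < (1 + ε / dmin + log (dmax / dmin)) * m + 1 := by
  set L := m * log (dmax / dmin)
  have hL : 0 ≤ L := mul_nonneg m.cast_nonneg (log_nonneg ((one_le_div hdmin).2 hdd))
  -- Stop at `k`: either the residual is already small there, or `k < L ≤ ⌈L⌉₊` forces `k = n`.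
  set k := min n ⌈L⌉₊ with hk_def
  have hkn : k ≤ n := min_le_left _ _
  by_cases hsmall : g n - g k ≤ m * (dmin + ε)
  · have hrest : ((n : ℝ) - k) * dmin ≤ m * (1 + ε / dmin) * dmin := by
      calc ((n : ℝ) - k) * dmin ≤ g n - g k := sub_mul_le_sub_of_le_sub_succ hstep hkn
        _ ≤ m * (1 + ε / dmin) * dmin := by
          rw [mul_assoc, add_mul, div_mul_cancel₀ _ hdmin.ne']
          linarith
    have hkL : (k : ℝ) < L + 1 :=
      (Nat.cast_le.2 (min_le_right _ _)).trans_lt (Nat.ceil_lt_add_one hL)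
    linarith [le_of_mul_le_mul_right hrest hdmin]
  · have hdecay := sub_sub_le_geom (fun k hk => hdmin.le.trans (hstep k hk)) hgap hkn
    have hkL : (k : ℝ) < L := lt_mul_log_of_mul_lt_geom hdmin <| by
      calc (m : ℝ) * dmin < g n - g k - m * ε := by linarith
        _ ≤ _ := hdecay.trans (mul_le_mul_of_nonneg_left (by linarith)
          (pow_nonneg (one_sub_inv_natCast_nonneg m) _))
    have hk : k = n := (min_choice n ⌈L⌉₊).resolve_right fun h =>
      (Nat.le_ceil L).not_gt (by rwa [hk_def, h] at hkL)
    rw [hk] at hkL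
    have htail : 0 ≤ m * (1 + ε / dmin) := by positivity
    linarith

end GreedyRecurrence

section PrefixSet

variable {U : Type*} [DecidableEq U] {n : ℕ}

@[simp]
lemma prefixSet_zero (s : Fin n → U) : prefixSet s 0 = ∅ := by
  simp [prefixSet]

lemma prefixSet_succ (s : Fin n → U) {k : ℕ} (hk : k < n) :
    prefixSet s (k + 1) = insert (s ⟨k, hk⟩) (prefixSet s k) := by
  rw [prefixSet, prefixSet, ← image_insert]
  congr 1
  ext j
  simp [le_iff_lt_or_eq, Fin.ext_iff, or_comm]

lemma apply_notMem_prefixSet {s : Fin n → U} (hs : Function.Injective s) (i : Fin n) :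
    s i ∉ prefixSet s i := by
  simp [prefixSet, hs.eq_iff]

lemma card_prefixSet {s : Fin n → U} (hs : Function.Injective s) : (prefixSet s n).card = n := by
  simp [prefixSet, card_image_of_injective _ hs]

end PrefixSet

lemma sub_le_mul_of_marginal_le {U : Type*} [DecidableEq U] {𝒞 : Set (Finset U)}
    {f : Finset U → ℝ} {ε : ℝ}
    (happrox : ∀ A : Finset U, ∀ B ∈ 𝒞, ∀ x ∉ B,
      f (insert x (A ∪ B)) - f (A ∪ B) ≤ f (insert x A) - f A + ε)
    {m : ℕ} {c : Fin m → U} (hc : Function.Injective c) (hpref : ∀ j < m, prefixSet c j ∈ 𝒞)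
    {A : Finset U} {d : ℝ} (hd : ∀ x, f (insert x A) - f A ≤ d) :
    f (A ∪ prefixSet c m) - f A ≤ m * (d + ε) := by
  suffices h : ∀ j ≤ m, f (A ∪ prefixSet c j) - f A ≤ j * (d + ε) from h m le_rfl
  intro j hj
  induction j with
  | zero => simp
  | succ j ih =>
    have hstep := happrox A _ (hpref j hj) _ (apply_notMem_prefixSet hc ⟨j, hj⟩)
    rw [prefixSet_succ c hj, union_insert]
    push_cast
    linarith [ih (by omega), hd (c ⟨j, hj⟩)]

theorem stmt6_general {U : Type*} [DecidableEq U]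
    (𝒞 : Set (Finset U))
    (f : Finset U → ℝ) (ε : ℝ) (hε : 0 ≤ ε)
    (hmono : ∀ A B : Finset U, A ⊆ B → f A ≤ f B)
    (happrox : ∀ A : Finset U, ∀ B ∈ 𝒞, ∀ x ∉ B,
      f (insert x (A ∪ B)) - f (A ∪ B) ≤ f (insert x A) - f A + ε)
    {n : ℕ} (s : Fin n → U)
    (hgreedy : ∀ i : Fin n, ∀ u : U,
      f (insert u (prefixSet s i)) - f (prefixSet s i) ≤
        f (insert (s i) (prefixSet s i)) - f (prefixSet s i))
    (fmax : ℝ)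
    (hS : f (prefixSet s n) = fmax)
    (dmin dmax : ℝ) (hdminpos : 0 < dmin)
    (hdmin : IsLeast
      {d : ℝ | ∃ i : Fin n, d = f (insert (s i) (prefixSet s i)) - f (prefixSet s i)} dmin)
    (hdmax : IsGreatest (Set.range fun x : U => f {x} - f ∅) dmax)
    (C : Finset U) (hC : f C = fmax)
    {m : ℕ} (c : Fin m → U) (hcinj : Function.Injective c)
    (hCorder : prefixSet c m = C)
    (hpref : ∀ j ≤ m, prefixSet c j ∈ 𝒞) :
    (n : ℝ) < (1 + ε / dmin + Real.log (dmax / dmin)) * C.card + 1 := by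
  have hgap (A : Finset U) (d : ℝ) (hd : ∀ x, f (insert x A) - f A ≤ d) :
      fmax - f A ≤ m * (d + ε) := by
    have := sub_le_mul_of_marginal_le happrox hcinj (fun j hj => hpref j hj.le) hd
    rw [hCorder] at this
    linarith [hmono C (A ∪ C) subset_union_right]
  have hgain (k : ℕ) (hk : k < n) : f (prefixSet s (k + 1)) - f (prefixSet s k) =
      f (insert (s ⟨k, hk⟩) (prefixSet s k)) - f (prefixSet s k) := by
    rw [← prefixSet_succ s hk]
  obtain ⟨⟨i₀, -⟩, hlb⟩ := hdmin
  have hdd : dmin ≤ dmax := by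
    have := hlb ⟨⟨0, i₀.pos⟩, rfl⟩
    simp only [prefixSet_zero, insert_empty] at this
    exact this.trans (hdmax.2 ⟨s ⟨0, i₀.pos⟩, rfl⟩)
  rw [← hCorder, card_prefixSet hcinj]
  refine natCast_lt_of_greedy_recurrence (g := fun k => f (prefixSet s k)) hε hdminpos hdd
    (fun k hk => (hgain k hk).symm ▸ hlb ⟨⟨k, hk⟩, rfl⟩) (fun k hk => ?_) ?_
  · rw [hgain k hk, hS]
    exact hgap _ _ (hgreedy ⟨k, hk⟩)
  · rw [hS, prefixSet_zero]
    exact hgap ∅ dmax fun x => by simpa using hdmax.2 ⟨x, rfl⟩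

/-- greedy approximation bound for non-decreasing
ε-approximately 𝒞-submodular functions, for optimal sets C all of whose
prefixes (for some ordering) lie in 𝒞:
|S| < (1 + ε/δ_min + ln(δ_max/δ_min))·|C| + 1. -/
theorem stmt6 {U : Type*} [Fintype U] [DecidableEq U] [Nonempty U]
    (𝒞 : Set (Finset U))
    (f : Finset U → ℝ) (ε : ℝ) (hε : 0 ≤ ε)
    (hmono : ∀ A B : Finset U, A ⊆ B → f A ≤ f B)
    (happrox : ∀ A : Finset U, ∀ B ∈ 𝒞, ∀ x ∉ B,
      f (insert x (A ∪ B)) - f (A ∪ B) ≤ f (insert x A) - f A + ε)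
    {n : ℕ} (s : Fin n → U) (hinj : Function.Injective s)
    (hgreedy : ∀ i : Fin n, ∀ u : U,
      f (insert u (prefixSet s i)) - f (prefixSet s i) ≤
        f (insert (s i) (prefixSet s i)) - f (prefixSet s i))
    (fmax : ℝ) (hfmax : ∀ X : Finset U, f X ≤ fmax)
    (hS : f (prefixSet s n) = fmax)
    (dmin dmax : ℝ) (hdminpos : 0 < dmin)
    (hdmin : IsLeast
      {d : ℝ | ∃ i : Fin n, d = f (insert (s i) (prefixSet s i)) - f (prefixSet s i)} dmin)
    (hdmax : IsGreatest (Set.range fun x : U => f {x} - f ∅) dmax)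
    (C : Finset U) (hC : f C = fmax)
    {m : ℕ} (c : Fin m → U) (hcinj : Function.Injective c)
    (hCorder : prefixSet c m = C)
    (hpref : ∀ j ≤ m, prefixSet c j ∈ 𝒞) :
    (n : ℝ) < (1 + ε / dmin + Real.log (dmax / dmin)) * C.card + 1 :=
  stmt6_general 𝒞 f ε hε hmono happrox s hgreedy fmax hS dmin dmax hdminpos hdmin hdmax C hC c hcinj
    hCorder hpref
end

section
/- For the fault-tolerant total domination potential f(A) = Σ_{v∈V} m_A(v), for every A ⊆ V and x ∈ V \ A it holds f(A ∪ {x}) = f(A) + |N_{V\K(A)}(x)| + t_A(x), where K(A) = {v : m_A(v) = m}, and t_A(x) = 0 if x ∈ K(A); t_A(x) = m − |N_A(x)| if x ∉ K(A) and |N_A(x)| > 0; t_A(x) = m − 1 if x ∉ K(A) and |N_A(x)| = 0. -/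
open Finset

/-- The potential m_A(v) for fault-tolerant total domination. -/
def mPot {V : Type*} [Fintype V] [DecidableEq V]
    (G : SimpleGraph V) [DecidableRel G.Adj] (m : ℕ) (A : Finset V) (v : V) : ℕ :=
  if (v ∉ A ∧ m ≤ (A.filter (G.Adj v)).card) ∨ (v ∈ A ∧ 0 < (A.filter (G.Adj v)).card)
  then m
  else if v ∈ A ∧ (A.filter (G.Adj v)).card = 0 then m - 1
  else (A.filter (G.Adj v)).card

/-- Fault-tolerant total domination potential f(A) = Σ_v m_A(v). -/
def fFT {V : Type*} [Fintype V] [DecidableEq V]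
    (G : SimpleGraph V) [DecidableRel G.Adj] (m : ℕ) (A : Finset V) : ℝ :=
  ∑ v, (mPot G m A v : ℝ)

/-- K(A) = {v : m_A(v) = m}. -/
def KsetM {V : Type*} [Fintype V] [DecidableEq V]
    (G : SimpleGraph V) [DecidableRel G.Adj] (m : ℕ) (A : Finset V) : Finset V :=
  univ.filter (fun v => mPot G m A v = m)

/-- The correction term t_A(x). -/
def tPot {V : Type*} [Fintype V] [DecidableEq V]
    (G : SimpleGraph V) [DecidableRel G.Adj] (m : ℕ) (A : Finset V) (x : V) : ℕ :=
  if x ∈ KsetM G m A then 0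
  else if 0 < (A.filter (G.Adj x)).card then m - (A.filter (G.Adj x)).card
  else m - 1

/-!
Adding `x` to `A` changes `m_A(v)` only at `x` and at its neighbours. A neighbour `v ≠ x`
gains one neighbour in the set, which raises `m_A(v)` by exactly one unless it is already
saturated at `m`, i.e. unless `v ∈ K(A)`. The vertex `x` itself has the same neighbours in
`A ∪ {x}` as in `A` (no loops), but now lies in the set, so its value rises from
`min(m, |N_A(x)|)` to `m` (or to `m - 1` if it has no neighbour in `A`): this is `t_A(x)`.
-/

section

variable {V : Type*} [Fintype V] [DecidableEq V] (G : SimpleGraph V) [DecidableRel G.Adj]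
  (m : ℕ) {A : Finset V} {x : V}

lemma mem_KsetM {v : V} : v ∈ KsetM G m A ↔ mPot G m A v = m := by
  simp [KsetM]

lemma mPot_insert_self (hx : x ∉ A) :
    mPot G m (insert x A) x = mPot G m A x + tPot G m A x := by
  have hN : (insert x A).filter (G.Adj x) = A.filter (G.Adj x) := by
    rw [filter_insert, if_neg (G.loopless.irrefl x)]
  simp only [tPot, mem_KsetM, mPot, hN, mem_insert_self, hx, not_true, not_false_eq_true,
    true_and, false_and, or_false, false_or, if_false]
  split_ifs <;> omega

lemma mPot_insert_of_adj {v : V} (hx : x ∉ A) (hxv : G.Adj x v) :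
    mPot G m (insert x A) v = mPot G m A v + if v ∈ KsetM G m A then 0 else 1 := by
  have hvA : v ∈ insert x A ↔ v ∈ A := by simp [hxv.ne.symm]
  have hN : ((insert x A).filter (G.Adj v)).card = (A.filter (G.Adj v)).card + 1 := by
    rw [filter_insert, if_pos hxv.symm, card_insert_of_notMem (by simp [hx])]
  by_cases hv : v ∈ A <;>
    simp only [mem_KsetM, mPot, hvA, hN, hv, not_true, not_false_eq_true,
      true_and, false_and, or_false, false_or, if_false] <;>
    split_ifs <;> omega

lemma mPot_insert_of_not_adj {v : V} (hvx : v ≠ x) (hxv : ¬ G.Adj x v) :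
    mPot G m (insert x A) v = mPot G m A v := by
  have hvA : v ∈ insert x A ↔ v ∈ A := by simp [hvx]
  have hN : (insert x A).filter (G.Adj v) = A.filter (G.Adj v) := by
    rw [filter_insert, if_neg (fun h => hxv h.symm)]
  simp only [mPot, hvA, hN]

lemma mPot_insert (hx : x ∉ A) (v : V) :
    mPot G m (insert x A) v =
      mPot G m A v + (if v ∈ (univ \ KsetM G m A).filter (G.Adj x) then 1 else 0) +
        if v = x then tPot G m A x else 0 := by
  by_cases hvx : v = x
  · subst hvx
    simp [mPot_insert_self G m hx]
  by_cases hxv : G.Adj x v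
  · simp [mPot_insert_of_adj G m hx hxv, hxv, hvx]
  · simp [mPot_insert_of_not_adj G m hvx hxv, hxv, hvx]

lemma sum_mPot_insert (hx : x ∉ A) :
    ∑ v, mPot G m (insert x A) v =
      ∑ v, mPot G m A v + ((univ \ KsetM G m A).filter (G.Adj x)).card + tPot G m A x := by
  simp only [mPot_insert G m hx, sum_add_distrib, sum_boole, sum_ite_eq', mem_univ, if_true,
    Nat.cast_id, filter_mem_eq_inter, univ_inter]

end

theorem stmt10_general {V : Type*} [Fintype V] [DecidableEq V]
    (G : SimpleGraph V) [DecidableRel G.Adj]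
    (m : ℕ) (A : Finset V) (x : V) (hx : x ∉ A) :
    fFT G m (insert x A) =
      fFT G m A + (((univ \ KsetM G m A).filter (G.Adj x)).card : ℝ) +
        (tPot G m A x : ℝ) := by
  simp only [fFT]
  exact_mod_cast sum_mPot_insert G m hx

/-- f(A ∪ {x}) = f(A) + |N_{V\K(A)}(x)| + t_A(x). -/
theorem stmt10 {V : Type*} [Fintype V] [DecidableEq V]
    (G : SimpleGraph V) [DecidableRel G.Adj]
    (m : ℕ) (hm : 1 ≤ m) (A : Finset V) (x : V) (hx : x ∉ A) :
    fFT G m (insert x A) =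
      fFT G m A + (((univ \ KsetM G m A).filter (G.Adj x)).card : ℝ) +
        (tPot G m A x : ℝ) :=
  stmt10_general G m A x hx
end

section
/- The fault-tolerant total domination potential f(A) = Σ_{v∈V} m_A(v) is monotone non-decreasing and submodular on subsets of V. -/
open Finset

/-! Every term m_A(v) depends only on whether `v ∈ A` and on the degree `d = |N_A(v)|`; the
potential is monotone in both, concave in `d`, and the gain from joining `A` does not increase
with `d`. Summing these vertexwise inequalities gives monotonicity and submodularity of `f`. -/

def vertexPot (m : ℕ) (p : Prop) [Decidable p] (d : ℕ) : ℕ :=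
  if p then (if d = 0 then m - 1 else m) else min d m

section VertexPot

variable (m : ℕ) {p q : Prop} [Decidable p] [Decidable q] {d d' : ℕ}

theorem vertexPot_mono (hpq : p → q) (hd : d ≤ d') : vertexPot m p d ≤ vertexPot m q d' := by
  unfold vertexPot
  split_ifs <;> first | omega | tauto

theorem vertexPot_add_add_le (hpq : p → q) (hd : d ≤ d') (e : ℕ) :
    vertexPot m q (d' + e) + vertexPot m p d ≤ vertexPot m p (d + e) + vertexPot m q d' := by
  unfold vertexPot
  split_ifs <;> first | omega | tauto

theorem vertexPot_true_add_le (hd : d ≤ d') :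
    vertexPot m True d' + vertexPot m False d ≤ vertexPot m True d + vertexPot m False d' := by
  simp only [vertexPot, if_true, if_false]
  split_ifs <;> omega

end VertexPot

section Potential

variable {V : Type*} [Fintype V] [DecidableEq V] (G : SimpleGraph V) [DecidableRel G.Adj]
  (m : ℕ) {A B : Finset V} {x : V}

theorem mPot_eq_vertexPot (A : Finset V) (v : V) :
    mPot G m A v = vertexPot m (v ∈ A) #(A.filter (G.Adj v)) := by
  unfold mPot vertexPot
  generalize #(A.filter (G.Adj v)) = d
  by_cases hv : v ∈ A <;> simp only [hv, not_true_eq_false, not_false_eq_true, true_and,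
    false_and, or_false, false_or, if_true, if_false] <;> split_ifs <;> omega

omit [Fintype V] in
theorem card_filter_adj_insert (hx : x ∉ A) (v : V) :
    #((insert x A).filter (G.Adj v)) = #(A.filter (G.Adj v)) + if G.Adj v x then 1 else 0 := by
  rw [filter_insert]
  split_ifs
  · rw [card_insert_of_notMem fun h => hx (mem_filter.mp h).1]
  · rfl

theorem mPot_mono (hAB : A ⊆ B) (v : V) : mPot G m A v ≤ mPot G m B v := by
  rw [mPot_eq_vertexPot, mPot_eq_vertexPot]
  exact vertexPot_mono m (@hAB v) (card_le_card (filter_subset_filter _ hAB))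

theorem mPot_insert_add_le (hAB : A ⊆ B) (hx : x ∉ B) (v : V) :
    mPot G m (insert x B) v + mPot G m A v ≤ mPot G m (insert x A) v + mPot G m B v := by
  have hxA : x ∉ A := fun h => hx (hAB h)
  have hd := card_le_card (filter_subset_filter (G.Adj v) hAB)
  simp only [mPot_eq_vertexPot, card_filter_adj_insert G hx, card_filter_adj_insert G hxA,
    mem_insert]
  obtain rfl | hvx := eq_or_ne v x
  · simpa [hx, hxA] using vertexPot_true_add_le m hd
  · simpa [hvx] using vertexPot_add_add_le m (@hAB v) hd _

theorem fFT_mono (hAB : A ⊆ B) : fFT G m A ≤ fFT G m B :=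
  sum_le_sum fun v _ => Nat.cast_le.mpr (mPot_mono G m hAB v)

theorem fFT_insert_add_le (hAB : A ⊆ B) (hx : x ∉ B) :
    fFT G m (insert x B) + fFT G m A ≤ fFT G m (insert x A) + fFT G m B := by
  simp only [fFT, ← sum_add_distrib]
  exact sum_le_sum fun v _ => by exact_mod_cast mPot_insert_add_le G m hAB hx v

end Potential

theorem stmt11_general {V : Type*} [Fintype V] [DecidableEq V]
    (G : SimpleGraph V) [DecidableRel G.Adj] (m : ℕ) :
    (∀ A B : Finset V, A ⊆ B → fFT G m A ≤ fFT G m B) ∧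
    (∀ A B : Finset V, A ⊆ B → ∀ x ∉ B,
      fFT G m (insert x B) - fFT G m B ≤ fFT G m (insert x A) - fFT G m A) :=
  ⟨fun _ _ hAB => fFT_mono G m hAB,
    fun _ _ hAB _ hx => by linarith [fFT_insert_add_le G m hAB hx]⟩

/-- the fault-tolerant total domination potential is monotone
non-decreasing and submodular. -/
theorem stmt11 {V : Type*} [Fintype V] [DecidableEq V]
    (G : SimpleGraph V) [DecidableRel G.Adj] (m : ℕ) (hm : 1 ≤ m) :
    (∀ A B : Finset V, A ⊆ B → fFT G m A ≤ fFT G m B) ∧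
    (∀ A B : Finset V, A ⊆ B → ∀ x ∉ B,
      fFT G m (insert x B) - fFT G m B ≤ fFT G m (insert x A) - fFT G m A) :=
  stmt11_general G m
end

section
/- The WPPIDS potential h(A) = Σ_{v∈V} h_A(v), where h_A(v) = W(v)/2 if v ∈ A or W_A(v) ≥ W(v)/2, and h_A(v) = W_A(v) otherwise, is monotone non-decreasing and submodular on subsets of V. -/
open Finset

/-- W_A(v) = sum of weights of edges from v to its neighbors in A. -/
def WgtR {V : Type*} [Fintype V] [DecidableEq V]
    (G : SimpleGraph V) [DecidableRel G.Adj] (w : V → V → ℝ)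
    (A : Finset V) (v : V) : ℝ :=
  ∑ u ∈ A.filter (G.Adj v), w v u

/-- Per-vertex WPPIDS potential: h_A(v) = W(v)/2 if v ∈ A or W_A(v) ≥ W(v)/2,
else W_A(v). -/
noncomputable def hAux {V : Type*} [Fintype V] [DecidableEq V]
    (G : SimpleGraph V) [DecidableRel G.Adj] (w : V → V → ℝ)
    (A : Finset V) (v : V) : ℝ :=
  if v ∈ A ∨ WgtR G w univ v / 2 ≤ WgtR G w A v then WgtR G w univ v / 2
  else WgtR G w A v

/-- WPPIDS potential h(A) = Σ_v h_A(v). -/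
noncomputable def hPot {V : Type*} [Fintype V] [DecidableEq V]
    (G : SimpleGraph V) [DecidableRel G.Adj] (w : V → V → ℝ)
    (A : Finset V) : ℝ :=
  ∑ v, hAux G w A v

/-! Each `h_A(v)` has the form `min t (∑ u ∈ A, c u)` with `c ≥ 0`: a concave function of a
nonnegative modular set function. Such a function is monotone, and it is submodular because
the increment `min t (s + d) - min t s` is antitone in `s`. Summing over `v` gives the theorem. -/

lemma min_add_sub_min_antitone {t a b d : ℝ} (hab : a ≤ b) (hd : 0 ≤ d) :
    min t (b + d) - min t b ≤ min t (a + d) - min t a := by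
  simp only [min_def]
  split_ifs <;> linarith

section TruncatedSum

variable {ι : Type*} {c : ι → ℝ} (t : ℝ)

lemma min_sum_mono (hc : ∀ i, 0 ≤ c i) {A B : Finset ι} (hAB : A ⊆ B) :
    min t (∑ i ∈ A, c i) ≤ min t (∑ i ∈ B, c i) :=
  min_le_min_left t (sum_le_sum_of_subset_of_nonneg hAB fun i _ _ => hc i)

lemma min_sum_insert_sub_antitone [DecidableEq ι] (hc : ∀ i, 0 ≤ c i) {A B : Finset ι}
    (hAB : A ⊆ B) (x : ι) :
    min t (∑ i ∈ insert x B, c i) - min t (∑ i ∈ B, c i) ≤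
      min t (∑ i ∈ insert x A, c i) - min t (∑ i ∈ A, c i) := by
  by_cases hxB : x ∈ B
  · rw [insert_eq_of_mem hxB, sub_self, sub_nonneg]
    exact min_sum_mono t hc (subset_insert x A)
  · have hxA : x ∉ A := fun h => hxB (hAB h)
    rw [sum_insert hxB, sum_insert hxA, add_comm (c x), add_comm (c x)]
    exact min_add_sub_min_antitone (sum_le_sum_of_subset_of_nonneg hAB fun i _ _ => hc i) (hc x)

end TruncatedSum

section Potential

variable {V : Type*} [Fintype V] [DecidableEq V]
    (G : SimpleGraph V) [DecidableRel G.Adj] (w : V → V → ℝ)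

/-- The summand `u = v` saturates the truncation at `W(v)/2` as soon as `v ∈ A`. -/
noncomputable def potentialWeight (v u : V) : ℝ :=
  (if G.Adj v u then w v u else 0) + if u = v then WgtR G w univ v / 2 else 0

variable {G w}

lemma WgtR_nonneg (hw : ∀ u v : V, G.Adj u v → 0 ≤ w u v) (A : Finset V) (v : V) :
    0 ≤ WgtR G w A v :=
  sum_nonneg fun u hu => hw v u (mem_filter.mp hu).2

lemma potentialWeight_nonneg (hw : ∀ u v : V, G.Adj u v → 0 ≤ w u v) (v u : V) :
    0 ≤ potentialWeight G w v u := by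
  refine add_nonneg ?_ ?_
  · split_ifs with hadj
    exacts [hw v u hadj, le_rfl]
  · split_ifs
    exacts [div_nonneg (WgtR_nonneg hw univ v) zero_le_two, le_rfl]

lemma sum_potentialWeight (A : Finset V) (v : V) :
    ∑ u ∈ A, potentialWeight G w v u =
      WgtR G w A v + if v ∈ A then WgtR G w univ v / 2 else 0 := by
  simp only [potentialWeight, sum_add_distrib, sum_ite_eq', WgtR, sum_filter]

lemma hAux_eq_min_sum (hw : ∀ u v : V, G.Adj u v → 0 ≤ w u v) (A : Finset V) (v : V) :
    hAux G w A v = min (WgtR G w univ v / 2) (∑ u ∈ A, potentialWeight G w v u) := by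
  rw [sum_potentialWeight, hAux]
  by_cases hv : v ∈ A
  · have := WgtR_nonneg hw A v
    simp only [hv, true_or, if_true]
    exact (min_eq_left (by linarith)).symm
  · simp only [hv, false_or, if_false, add_zero, min_def]

end Potential

/-- the WPPIDS potential is monotone non-decreasing and
submodular. -/
theorem stmt14 {V : Type*} [Fintype V] [DecidableEq V]
    (G : SimpleGraph V) [DecidableRel G.Adj] (w : V → V → ℝ)
    (hpos : ∀ u v : V, G.Adj u v → 0 < w u v) :
    (∀ A B : Finset V, A ⊆ B → hPot G w A ≤ hPot G w B) ∧
    (∀ A B : Finset V, A ⊆ B → ∀ x : V,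
      hPot G w (insert x B) - hPot G w B ≤
        hPot G w (insert x A) - hPot G w A) := by
  have hw : ∀ u v : V, G.Adj u v → 0 ≤ w u v := fun u v h => (hpos u v h).le
  have hc := potentialWeight_nonneg hw
  simp only [hPot, hAux_eq_min_sum hw, ← sum_sub_distrib]
  exact ⟨fun A B hAB => sum_le_sum fun v _ => min_sum_mono _ (hc v) hAB,
    fun A B hAB x => sum_le_sum fun v _ => min_sum_insert_sub_antitone _ (hc v) hAB x⟩
end

section
/- A set S ⊆ V is a weighted partial positive influence dominating set (for every v ∈ V \ S, W_S(v) ≥ W(v)/2) if and only if h(S) = Σ_{v∈V} W(v)/2, where h(A) = Σ_{v∈V} h_A(v); moreover Σ_{v∈V} W(v)/2 = h(V) is the maximum value of h. -/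
/-!
Each term `h_A(v)` is at most `W(v)/2`, with equality exactly when `v ∈ A` or
`W_A(v) ≥ W(v)/2`. Hence `h(A) ≤ Σ_v W(v)/2`, with equality iff every vertex is in this
situation, which for `A = S` is the dominating condition and for `A = V` always holds.
-/

open Finset

section Potential

variable {V : Type*} [Fintype V] [DecidableEq V] (G : SimpleGraph V) [DecidableRel G.Adj]
  (w : V → V → ℝ)

lemma hAux_le_half (A : Finset V) (v : V) : hAux G w A v ≤ WgtR G w univ v / 2 := by
  unfold hAux
  split_ifs with h
  · exact le_rfl
  · push Not at h
    exact h.2.le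

lemma hAux_eq_half_iff (A : Finset V) (v : V) :
    hAux G w A v = WgtR G w univ v / 2 ↔ v ∈ A ∨ WgtR G w univ v / 2 ≤ WgtR G w A v := by
  unfold hAux
  split_ifs with h
  · simpa using h
  · push Not at h
    simp only [h.1, false_or, not_le.mpr h.2, iff_false]
    exact h.2.ne

lemma hPot_le_sum_half (A : Finset V) : hPot G w A ≤ ∑ v, WgtR G w univ v / 2 :=
  sum_le_sum fun v _ => hAux_le_half G w A v

lemma hPot_eq_sum_half_iff (A : Finset V) :
    hPot G w A = ∑ v, WgtR G w univ v / 2 ↔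
      ∀ v, v ∈ A ∨ WgtR G w univ v / 2 ≤ WgtR G w A v := by
  rw [hPot, sum_eq_sum_iff_of_le fun v _ => hAux_le_half G w A v]
  simp only [mem_univ, true_implies, hAux_eq_half_iff]

end Potential

theorem stmt15_general {V : Type*} [Fintype V] [DecidableEq V]
    (G : SimpleGraph V) [DecidableRel G.Adj] (w : V → V → ℝ)
    (S : Finset V) :
    ((∀ v ∉ S, WgtR G w univ v / 2 ≤ WgtR G w S v) ↔
      hPot G w S = ∑ v, WgtR G w univ v / 2) ∧
    hPot G w univ = (∑ v, WgtR G w univ v / 2) ∧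
    (∀ A : Finset V, hPot G w A ≤ ∑ v, WgtR G w univ v / 2) := by
  refine ⟨?_, (hPot_eq_sum_half_iff G w univ).mpr fun v => Or.inl (mem_univ v),
    hPot_le_sum_half G w⟩
  rw [hPot_eq_sum_half_iff]
  exact forall_congr' fun v => or_iff_not_imp_left.symm

/-- S is a WPPIDS iff h(S) = Σ_v W(v)/2; moreover this value
equals h(V) and is the maximum of h. -/
theorem stmt15 {V : Type*} [Fintype V] [DecidableEq V]
    (G : SimpleGraph V) [DecidableRel G.Adj] (w : V → V → ℝ)
    (hpos : ∀ u v : V, G.Adj u v → 0 < w u v) (S : Finset V) :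
    ((∀ v ∉ S, WgtR G w univ v / 2 ≤ WgtR G w S v) ↔
      hPot G w S = ∑ v, WgtR G w univ v / 2) ∧
    hPot G w univ = (∑ v, WgtR G w univ v / 2) ∧
    (∀ A : Finset V, hPot G w A ≤ ∑ v, WgtR G w univ v / 2) :=
  stmt15_general G w S
end

section
/- A set S ⊆ V is a weighted partial positive influence connected dominating set (S is a WPPIDS and the subgraph induced by S is connected) if and only if f(S) = h_max + (|V| − 2)/L, where f(A) = h(A) + (1/L)(|V| − q(A) − p(A)) and h_max = Σ_{v∈V} W(v)/2. -/
open Finset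

/-- W_A(v) = sum of weights of edges from v to its neighbors in A (ℚ-weights). -/
def WgtQ {V : Type*} [Fintype V] [DecidableEq V]
    (G : SimpleGraph V) [DecidableRel G.Adj] (w : V → V → ℚ)
    (A : Finset V) (v : V) : ℚ :=
  ∑ u ∈ A.filter (G.Adj v), w v u

/-- Per-vertex WPPIDS potential (ℚ-valued). -/
def hAuxQ {V : Type*} [Fintype V] [DecidableEq V]
    (G : SimpleGraph V) [DecidableRel G.Adj] (w : V → V → ℚ)
    (A : Finset V) (v : V) : ℚ :=
  if v ∈ A ∨ WgtQ G w univ v / 2 ≤ WgtQ G w A v then WgtQ G w univ v / 2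
  else WgtQ G w A v

/-- WPPIDS potential h(A) = Σ_v h_A(v). -/
def hPotQ {V : Type*} [Fintype V] [DecidableEq V]
    (G : SimpleGraph V) [DecidableRel G.Adj] (w : V → V → ℚ)
    (A : Finset V) : ℚ :=
  ∑ v, hAuxQ G w A v

/-- l(v): lcm of the denominators of W(v)/2 and of the incident edge weights. -/
def lv {V : Type*} [Fintype V] [DecidableEq V]
    (G : SimpleGraph V) [DecidableRel G.Adj] (w : V → V → ℚ) (v : V) : ℕ :=
  (insert (WgtQ G w univ v / 2).den
      ((univ.filter (G.Adj v)).image fun u => (w v u).den)).lcm id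

/-- L = max_v l(v). -/
def Lval {V : Type*} [Fintype V] [DecidableEq V]
    (G : SimpleGraph V) [DecidableRel G.Adj] (w : V → V → ℚ) : ℕ :=
  univ.sup (lv G w)

/-- p(A): number of connected components of the subgraph induced by A. -/
noncomputable def pNum {V : Type*} [Fintype V] [DecidableEq V]
    (G : SimpleGraph V) [DecidableRel G.Adj] (A : Finset V) : ℕ :=
  Nat.card (G.induce (A : Set V)).ConnectedComponent

/-- The spanning subgraph of G keeping the edges with at least one endpoint
in A. -/
def qGraph {V : Type*} [Fintype V] [DecidableEq V]
    (G : SimpleGraph V) [DecidableRel G.Adj] (A : Finset V) : SimpleGraph V where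
  Adj u v := G.Adj u v ∧ (u ∈ A ∨ v ∈ A)
  symm := by
    constructor
    intro u v h
    exact ⟨h.1.symm, h.2.symm⟩
  loopless := by
    constructor
    intro v h
    exact G.irrefl h.1

/-- q(A): number of connected components of that spanning subgraph. -/
noncomputable def qNum {V : Type*} [Fintype V] [DecidableEq V]
    (G : SimpleGraph V) [DecidableRel G.Adj] (A : Finset V) : ℕ :=
  Nat.card (qGraph G A).ConnectedComponent

/-- WPPICDS potential f(A) = h(A) + (1/L)(|V| − q(A) − p(A)). -/
noncomputable def fCon {V : Type*} [Fintype V] [DecidableEq V]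
    (G : SimpleGraph V) [DecidableRel G.Adj] (w : V → V → ℚ)
    (A : Finset V) : ℚ :=
  hPotQ G w A +
    (1 / (Lval G w : ℚ)) *
      ((Fintype.card V : ℚ) - (qNum G A : ℚ) - (pNum G A : ℚ))

/-!
Since `h(A) ≤ h_max` and `q(A) + p(A) ≥ 2` for all `A` (for `A = ∅` as `q(∅) = |V| ≥ 2`),
`h_max + (|V| − 2)/L` is the maximum of `f`, attained exactly when `h(S) = h_max` and
`q(S) + p(S) = 2`. The first condition says that `S` is a WPPIDS. Positive weights make such an `S`
nonempty and dominating, so the second condition is `p(S) = 1`, and a connected dominating `S`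
has `q(S) = 1` as well.
-/

namespace SimpleGraph

lemma nat_card_connectedComponent_eq_one_iff {α : Type*} {H : SimpleGraph α} :
    Nat.card H.ConnectedComponent = 1 ↔ H.Connected := by
  rw [Nat.card_eq_one_iff_unique, connected_iff]
  exact and_congr ⟨fun _ u v => ConnectedComponent.exact (Subsingleton.elim _ _),
    Preconnected.subsingleton_connectedComponent⟩
    ⟨fun ⟨c⟩ => ⟨Quot.out c⟩, Nonempty.map H.connectedComponentMk⟩

end SimpleGraph

section Potential

variable {V : Type*} [Fintype V] [DecidableEq V] (G : SimpleGraph V) [DecidableRel G.Adj]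
  (w : V → V → ℚ)

lemma exists_adj_mem_of_WgtQ_pos {A : Finset V} {v : V} (h : 0 < WgtQ G w A v) :
    ∃ u ∈ A, G.Adj v u := by
  obtain ⟨u, hu, -⟩ := Finset.exists_ne_zero_of_sum_ne_zero h.ne'
  exact ⟨u, (Finset.mem_filter.mp hu).1, (Finset.mem_filter.mp hu).2⟩

lemma WgtQ_univ_pos (hconn : G.Connected) (hcard : 2 ≤ Fintype.card V)
    (hpos : ∀ u v : V, G.Adj u v → 0 < w u v) (v : V) : 0 < WgtQ G w univ v := by
  have : Nontrivial V := Fintype.one_lt_card_iff_nontrivial.mp hcard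
  obtain ⟨u, hu⟩ := hconn.preconnected.exists_adj_of_nontrivial v
  exact Finset.sum_pos (fun x hx => hpos v x (Finset.mem_filter.mp hx).2)
    ⟨u, Finset.mem_filter.mpr ⟨mem_univ u, hu⟩⟩

lemma hAuxQ_le (A : Finset V) (v : V) : hAuxQ G w A v ≤ WgtQ G w univ v / 2 := by
  unfold hAuxQ
  split_ifs with h
  · rfl
  · rw [not_or, not_le] at h
    exact h.2.le

lemma hAuxQ_eq_iff (A : Finset V) (v : V) :
    hAuxQ G w A v = WgtQ G w univ v / 2 ↔ v ∈ A ∨ WgtQ G w univ v / 2 ≤ WgtQ G w A v := by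
  unfold hAuxQ
  split_ifs with h
  · simpa using h
  · rw [not_or, not_le] at h
    simp only [h.2.ne, h.1, h.2.not_ge, or_self]

lemma hPotQ_le (A : Finset V) : hPotQ G w A ≤ ∑ v, WgtQ G w univ v / 2 :=
  Finset.sum_le_sum fun v _ => hAuxQ_le G w A v

lemma hPotQ_eq_iff (A : Finset V) :
    hPotQ G w A = ∑ v, WgtQ G w univ v / 2 ↔
      ∀ v ∉ A, WgtQ G w univ v / 2 ≤ WgtQ G w A v := by
  rw [hPotQ, Finset.sum_eq_sum_iff_of_le fun v _ => hAuxQ_le G w A v]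
  simp only [mem_univ, true_implies, hAuxQ_eq_iff, or_iff_not_imp_left]

lemma Lval_pos [Nonempty V] : 0 < Lval G w := by
  obtain ⟨v⟩ := ‹Nonempty V›
  refine lt_of_lt_of_le (Nat.pos_of_ne_zero fun h => ?_) (Finset.le_sup (mem_univ v))
  obtain ⟨d, hd, hd0⟩ := Finset.lcm_eq_zero_iff.mp h
  simp only [Finset.mem_insert, Finset.mem_image] at hd
  rcases hd with rfl | ⟨u, -, rfl⟩ <;> exact (Rat.den_pos _).ne' hd0

end Potential

section Components

variable {V : Type*} [Fintype V] [DecidableEq V] (G : SimpleGraph V) [DecidableRel G.Adj]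

lemma qGraph_connected {S : Finset V} (hdom : ∀ v ∉ S, ∃ u ∈ S, G.Adj v u)
    (hS : (G.induce (S : Set V)).Connected) : (qGraph G S).Connected := by
  have hS_reach : ∀ s ∈ S, ∀ t ∈ S, (qGraph G S).Reachable s t := fun s hs t ht =>
    let ι : G.induce (S : Set V) →g qGraph G S :=
      ⟨Subtype.val, fun {a _} hab => ⟨hab, Or.inl a.2⟩⟩
    (hS.preconnected ⟨s, hs⟩ ⟨t, ht⟩).map ι
  have hreach_S : ∀ v, ∃ s ∈ S, (qGraph G S).Reachable v s := fun v => by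
    by_cases hv : v ∈ S
    · exact ⟨v, hv, .rfl⟩
    · obtain ⟨u, hu, hadj⟩ := hdom v hv
      exact ⟨u, hu, SimpleGraph.Adj.reachable ⟨hadj, Or.inr hu⟩⟩
  obtain ⟨⟨s, -⟩⟩ := hS.nonempty
  rw [SimpleGraph.connected_iff]
  refine ⟨fun u v => ?_, ⟨s⟩⟩
  obtain ⟨su, hsu, hu⟩ := hreach_S u
  obtain ⟨sv, hsv, hv⟩ := hreach_S v
  exact (hu.trans (hS_reach su hsu sv hsv)).trans hv.symm

lemma one_le_pNum {S : Finset V} (hS : S.Nonempty) : 1 ≤ pNum G S :=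
  have : Nonempty (G.induce (S : Set V)).ConnectedComponent :=
    ⟨(G.induce _).connectedComponentMk ⟨hS.choose, hS.choose_spec⟩⟩
  Nat.card_pos

lemma one_le_qNum [Nonempty V] (S : Finset V) : 1 ≤ qNum G S :=
  have : Nonempty (qGraph G S).ConnectedComponent :=
    ⟨(qGraph G S).connectedComponentMk (Classical.arbitrary V)⟩
  Nat.card_pos

lemma qNum_empty : qNum G ∅ = Fintype.card V := by
  have hbot : qGraph G ∅ = ⊥ := by
    ext u v
    simp [qGraph]
  have hinj : Function.Injective (qGraph G ∅).connectedComponentMk := fun u v h => by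
    rwa [SimpleGraph.ConnectedComponent.eq, hbot, SimpleGraph.reachable_bot] at h
  rw [qNum, ← Nat.card_eq_fintype_card]
  exact (Nat.card_eq_of_bijective _ ⟨hinj, Quot.mk_surjective⟩).symm

lemma two_le_qNum_add_pNum (hcard : 2 ≤ Fintype.card V) (S : Finset V) :
    2 ≤ qNum G S + pNum G S := by
  rcases S.eq_empty_or_nonempty with rfl | hS
  · rw [qNum_empty]
    omega
  · have : Nonempty V := ⟨hS.choose⟩
    have := one_le_qNum G S
    have := one_le_pNum G hS
    omega

end Components

lemma fCon_eq_max_iff {V : Type*} [Fintype V] [DecidableEq V] [Nonempty V]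
    (G : SimpleGraph V) [DecidableRel G.Adj] (w : V → V → ℚ) {A : Finset V}
    (hqp_ge : 2 ≤ qNum G A + pNum G A) :
    fCon G w A = (∑ v, WgtQ G w univ v / 2) + ((Fintype.card V : ℚ) - 2) / (Lval G w : ℚ) ↔
      hPotQ G w A = ∑ v, WgtQ G w univ v / 2 ∧ qNum G A + pNum G A = 2 := by
  have hL : (0 : ℚ) < Lval G w := by exact_mod_cast Lval_pos G w
  have hh := hPotQ_le G w A
  have hqp_ge' : (2 : ℚ) ≤ qNum G A + pNum G A := by exact_mod_cast hqp_ge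
  rw [fCon]
  constructor
  · intro h
    have hdef : (Lval G w : ℚ) * ((∑ v, WgtQ G w univ v / 2) - hPotQ G w A) =
        2 - qNum G A - pNum G A := by
      field_simp at h
      linarith
    have hqp : (qNum G A : ℚ) + pNum G A = 2 := by nlinarith
    refine ⟨?_, by exact_mod_cast hqp⟩
    have := (mul_eq_zero.mp (hdef.trans (by linarith))).resolve_left hL.ne'
    linarith
  · rintro ⟨hmax, hqp⟩
    have hqp : (qNum G A : ℚ) + pNum G A = 2 := by exact_mod_cast hqp
    rw [hmax]
    field_simp
    linarith

/-- S is a WPPICDS (a WPPIDS inducing a connected subgraph)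
iff f(S) = h_max + (|V| − 2)/L, where h_max = Σ_v W(v)/2. -/
theorem stmt19 {V : Type*} [Fintype V] [DecidableEq V]
    (G : SimpleGraph V) [DecidableRel G.Adj]
    (hconn : G.Connected) (hcard : 2 ≤ Fintype.card V)
    (w : V → V → ℚ) (hpos : ∀ u v : V, G.Adj u v → 0 < w u v)
    (S : Finset V) :
    ((∀ v ∉ S, WgtQ G w univ v / 2 ≤ WgtQ G w S v) ∧
        (G.induce (S : Set V)).Connected) ↔
      fCon G w S =
        (∑ v, WgtQ G w univ v / 2) +
          ((Fintype.card V : ℚ) - 2) / (Lval G w : ℚ) := by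
  have : Nonempty V := Fintype.card_pos_iff.mp (by omega)
  have hW := WgtQ_univ_pos G w hconn hcard hpos
  rw [fCon_eq_max_iff G w (two_le_qNum_add_pNum G hcard S), hPotQ_eq_iff]
  refine and_congr_right fun hWS => ?_
  have hdom : ∀ v ∉ S, ∃ u ∈ S, G.Adj v u := fun v hv =>
    exists_adj_mem_of_WgtQ_pos G w (by linarith [hW v, hWS v hv])
  constructor
  · intro hS
    rw [qNum, pNum, SimpleGraph.nat_card_connectedComponent_eq_one_iff.mpr hS,
      SimpleGraph.nat_card_connectedComponent_eq_one_iff.mpr (qGraph_connected G hdom hS)]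
  · intro hqp
    have hS : S.Nonempty := by
      obtain ⟨v⟩ := ‹Nonempty V›
      by_cases hv : v ∈ S
      · exact ⟨v, hv⟩
      · obtain ⟨u, hu, -⟩ := hdom v hv
        exact ⟨u, hu⟩
    have := one_le_qNum G S
    have := one_le_pNum G hS
    exact SimpleGraph.nat_card_connectedComponent_eq_one_iff.mp (by rw [← pNum]; omega)
end
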